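/- arXiv:2407.19210 — 4 statements merged into one kernel-verified Lean document; each statement's English description precedes it below -/
import Mathlib

section
/- Let (c_n)_{n≥-1} and (λ_n)_{n≥0} be sequences of complex numbers such that λ_n ≠ λ_m for n ≠ m, λ_0 is real, λ_n is real for all but finitely many n ≥ 0, ∑_{n≥-1} |c_n| < ∞, and there exists Λ ∈ ℝ with Re λ_n ≤ Λ for all n ≥ 0. If there is a positive real T such that (c_{-1} t + c_0) e^{λ_0 t} + ∑_{n≥1} c_n e^{λ_n t} = 0 for all t ∈ (0,T), then c_n = 0 for all n ≥ -1. -/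
/-!
Write `F(t) = c₋₁ t e^{λ₀ t} + ∑ₙ cₙ e^{λₙ t}`. The imaginary parts of the `λₙ` are bounded, so
`F` is holomorphic near `(0, ∞)` and vanishing on `(0, T)` forces `F = 0` on `(0, ∞)`. Hence the
Laplace transform `G(s) = c₋₁ / (s - λ₀)² + ∑ₙ cₙ / (s - λₙ)` vanishes for `Re s > Λ`, hence by the
identity theorem on the whole complement of the finitely many rays `{Im s = Im λₙ, Re s ≤ Λ}`,
which is connected and avoids every pole. Letting `s = λₘ + iε` with `ε → 0⁺`, dominated
convergence gives `(s - λₘ) G(s) → cₘ` and `(s - λ₀)² G(s) → c₋₁`, so every coefficient vanishes.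
-/

open Complex Filter Topology Set MeasureTheory

section LaplaceIntegrals

variable {a : ℂ}

lemma tendsto_mul_exp_mul_complex_atTop (ha : a.re < 0) :
    Tendsto (fun t : ℝ => (t : ℂ) * cexp (a * t)) atTop (𝓝 0) := by
  rw [tendsto_zero_iff_norm_tendsto_zero]
  refine (tendsto_rpow_mul_exp_neg_mul_atTop_nhds_zero 1 (-a.re) (by linarith)).congr' ?_
  filter_upwards [eventually_ge_atTop 0] with t ht
  simp [norm_exp, abs_of_nonneg ht]

lemma integrableOn_mul_exp_mul_complex_Ioi (ha : a.re < 0) :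
    IntegrableOn (fun t : ℝ => (t : ℂ) * cexp (a * t)) (Ioi 0) := by
  have hreal := integrableOn_rpow_mul_exp_neg_mul_rpow (s := 1) (p := 1) (b := -a.re)
    (by norm_num) one_pos (by linarith)
  refine hreal.mono' (by fun_prop) ?_
  filter_upwards [ae_restrict_mem measurableSet_Ioi] with t (ht : 0 < t)
  simp [norm_exp, abs_of_pos ht]

lemma integral_mul_exp_mul_complex_Ioi (ha : a.re < 0) :
    ∫ t in Ioi (0 : ℝ), (t : ℂ) * cexp (a * t) = 1 / a ^ 2 := by
  have ha0 : a ≠ 0 := by rintro rfl; simp at ha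
  have hderiv : ∀ t : ℝ, HasDerivAt (fun s : ℝ => ((s : ℂ) / a - 1 / a ^ 2) * cexp (a * s))
      ((t : ℂ) * cexp (a * t)) t := by
    intro t
    have := (((hasDerivAt_id (t : ℂ)).div_const a).sub_const (1 / a ^ 2)).mul
      ((hasDerivAt_id (t : ℂ)).const_mul a).cexp
    refine (this.congr_deriv ?_).comp_ofReal
    simp only [id]
    field_simp
    ring
  have hlim : Tendsto (fun s : ℝ => ((s : ℂ) / a - 1 / a ^ 2) * cexp (a * s)) atTop (𝓝 0) := by
    have hexp : Tendsto (fun s : ℝ => cexp (a * s)) atTop (𝓝 0) := by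
      simpa [Complex.tendsto_exp_nhds_zero_iff] using
        tendsto_const_nhds.neg_mul_atTop ha tendsto_id
    have := ((tendsto_mul_exp_mul_complex_atTop ha).div_const a).sub (hexp.div_const (a ^ 2))
    rw [zero_div, zero_div, sub_zero] at this
    exact this.congr fun s => by ring
  rw [integral_Ioi_of_hasDerivAt_of_tendsto (hderiv 0).continuousAt.continuousWithinAt
    (fun t _ => hderiv t) (integrableOn_mul_exp_mul_complex_Ioi ha) hlim]
  simp

end LaplaceIntegrals

noncomputable section

/-- `c₀` is the coefficient `c₋₁` of `t e^{λ₀ t}` and `d n = cₙ`, so `c₀ e^{λ₀ t}` is the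
summand `n = 0`. -/
def expSeries (c₀ : ℂ) (d l : ℕ → ℂ) (z : ℂ) : ℂ :=
  c₀ * z * cexp (l 0 * z) + ∑' n, d n * cexp (l n * z)

def expSeriesLaplace (c₀ : ℂ) (d l : ℕ → ℂ) (s : ℂ) : ℂ :=
  c₀ / (s - l 0) ^ 2 + ∑' n, d n / (s - l n)

end

section AnalyticContinuation

variable {c₀ : ℂ} {d l : ℕ → ℂ} {Λ K : ℝ}

lemma summable_mul_cexp_mul (hd : Summable (‖d ·‖)) (hre : ∀ n, (l n).re ≤ Λ) {t : ℝ}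
    (ht : 0 ≤ t) : Summable fun n => d n * cexp (l n * t) := by
  refine Summable.of_norm_bounded (hd.mul_right (Real.exp (Λ * t))) fun n => ?_
  rw [norm_mul, norm_exp, re_mul_ofReal]
  gcongr
  exact hre n

lemma expSeries_eq_add_tsum_succ {z : ℂ} (hsum : Summable fun n => d n * cexp (l n * z)) :
    expSeries c₀ d l z =
      (c₀ * z + d 0) * cexp (l 0 * z) + ∑' n, d (n + 1) * cexp (l (n + 1) * z) := by
  rw [expSeries, hsum.tsum_eq_zero_add]
  ring

lemma norm_cexp_mul_le_of_mem_reProdIm {w z : ℂ} {B : ℝ} (hre : w.re ≤ Λ) (him : |w.im| ≤ K)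
    (hz : z ∈ Ioo 0 B ×ℂ Ioo (-1) 1) : ‖cexp (w * z)‖ ≤ Real.exp (|Λ| * B + K) := by
  obtain ⟨⟨hx₀, hxB⟩, hy₀, hy₁⟩ := hz
  rw [norm_exp, mul_re]
  gcongr
  have hre' : w.re * z.re ≤ |Λ| * B := by
    nlinarith [le_abs_self Λ, abs_nonneg Λ]
  have him' : -(w.im * z.im) ≤ K := by
    nlinarith [abs_le.mp him, abs_nonneg w.im]
  linarith

lemma differentiableOn_expSeries (hd : Summable (‖d ·‖)) (hre : ∀ n, (l n).re ≤ Λ)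
    (him : ∀ n, |(l n).im| ≤ K) (B : ℝ) :
    DifferentiableOn ℂ (expSeries c₀ d l) (Ioo 0 B ×ℂ Ioo (-1) 1) := by
  refine DifferentiableOn.add (by fun_prop) ?_
  exact differentiableOn_tsum_of_summable_norm (hd.mul_right (Real.exp (|Λ| * B + K)))
    (fun n => by fun_prop) (isOpen_Ioo.reProdIm isOpen_Ioo) fun n z hz => by
      rw [norm_mul]
      exact mul_le_mul_of_nonneg_left (norm_cexp_mul_le_of_mem_reProdIm (hre n) (him n) hz)
        (norm_nonneg _)

lemma expSeries_eq_zero_of_eqOn_Ioo (hd : Summable (‖d ·‖)) (hre : ∀ n, (l n).re ≤ Λ)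
    (him : ∀ n, |(l n).im| ≤ K) {T : ℝ} (hT : 0 < T)
    (hzero : ∀ t ∈ Ioo 0 T, expSeries c₀ d l t = 0) {t : ℝ} (ht : 0 < t) :
    expSeries c₀ d l t = 0 := by
  set U := Ioo 0 (t + T) ×ℂ Ioo (-1) 1
  have hU : Convex ℝ U :=
    ((convex_Ioo _ _).linear_preimage reLm).inter ((convex_Ioo _ _).linear_preimage imLm)
  have hmem {x : ℝ} (hx₀ : 0 < x) (hx : x < t + T) : (x : ℂ) ∈ U := by
    simp [U, mem_reProdIm, hx₀, hx]
  have hfreq : ∃ᶠ z in 𝓝[≠] ((T / 2 : ℝ) : ℂ), expSeries c₀ d l z = 0 := by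
    have hofReal : Tendsto ofReal (𝓝[≠] (T / 2)) (𝓝[≠] ((T / 2 : ℝ) : ℂ)) :=
      continuous_ofReal.continuousWithinAt.tendsto_nhdsWithin fun y hy => ofReal_injective.ne hy
    refine hofReal.frequently (Eventually.frequently ?_)
    filter_upwards [eventually_nhdsWithin_of_eventually_nhds
      (Ioo_mem_nhds (half_pos hT) (half_lt_self hT))] using hzero
  exact ((differentiableOn_expSeries hd hre him _).analyticOnNhd
    (isOpen_Ioo.reProdIm isOpen_Ioo)).eqOn_zero_of_preconnected_of_frequently_eq_zero
    hU.isPreconnected (hmem (half_pos hT) (by linarith)) hfreq (hmem ht (by linarith))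

end AnalyticContinuation

section Laplace

variable {c₀ : ℂ} {d l : ℕ → ℂ} {Λ : ℝ} {s : ℂ}

lemma integral_tsum_mul_cexp (hd : Summable (‖d ·‖)) (hre : ∀ n, (l n).re ≤ Λ) (hs : Λ < s.re) :
    ∫ t in Ioi (0 : ℝ), ∑' n, d n * cexp ((l n - s) * t) = ∑' n, d n / (s - l n) := by
  have hneg (n : ℕ) : (l n - s).re < 0 := by rw [sub_re]; linarith [hre n]
  have hint (n : ℕ) : IntegrableOn (fun t : ℝ => d n * cexp ((l n - s) * t)) (Ioi 0) :=
    (integrableOn_exp_mul_complex_Ioi (hneg n) 0).const_mul (d n)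
  have hnorm (n : ℕ) : ∫ t in Ioi (0 : ℝ), ‖d n * cexp ((l n - s) * t)‖
      ≤ ‖d n‖ * ∫ t in Ioi (0 : ℝ), Real.exp ((Λ - s.re) * t) := by
    rw [← integral_const_mul]
    refine setIntegral_mono_on (hint n).norm
      ((integrableOn_exp_mul_Ioi (by linarith) 0).const_mul _) measurableSet_Ioi fun t ht => ?_
    rw [norm_mul, norm_exp, re_mul_ofReal, sub_re]
    gcongr
    · exact le_of_lt ht
    · exact hre n
  rw [← integral_tsum_of_summable_integral_norm hint (Summable.of_nonneg_of_le
    (fun n => integral_nonneg fun t => norm_nonneg _) hnorm (hd.mul_right _))]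
  refine tsum_congr fun n => ?_
  have hsl : s - l n ≠ 0 := fun h => (hneg n).ne (by rw [← neg_sub, h]; simp)
  rw [integral_const_mul, integral_exp_mul_complex_Ioi (hneg n), ← neg_sub s]
  field_simp
  simp

lemma expSeriesLaplace_eq_zero (hd : Summable (‖d ·‖)) (hre : ∀ n, (l n).re ≤ Λ)
    (hzero : ∀ t : ℝ, 0 < t → expSeries c₀ d l t = 0) (hs : Λ < s.re) :
    expSeriesLaplace c₀ d l s = 0 := by
  have hshift : ∀ t ∈ Ioi (0 : ℝ), ∑' n, d n * cexp ((l n - s) * t)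
      = -(c₀ * ((t : ℂ) * cexp ((l 0 - s) * t))) := by
    intro t ht
    have h : ∑' n, d n * cexp (l n * t) = -(c₀ * t * cexp (l 0 * t)) := by
      have := hzero t ht
      rw [expSeries] at this
      linear_combination this
    calc ∑' n, d n * cexp ((l n - s) * t) = (∑' n, d n * cexp (l n * t)) * cexp (-s * t) := by
          rw [← tsum_mul_right]
          exact tsum_congr fun n => by rw [mul_assoc, ← exp_add]; ring_nf
      _ = _ := by rw [h, sub_mul, exp_sub, div_eq_mul_inv, ← exp_neg, neg_mul s]; ring
  have h0 : (l 0 - s).re < 0 := by rw [sub_re]; linarith [hre 0]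
  have := integral_tsum_mul_cexp hd hre hs
  rw [setIntegral_congr_fun measurableSet_Ioi hshift, integral_neg, integral_const_mul,
    integral_mul_exp_mul_complex_Ioi h0] at this
  rw [expSeriesLaplace, ← this, ← neg_sub s, neg_sq]
  ring

end Laplace

lemma isPreconnected_setOf_im_mem_imp_lt_re (S : Set ℝ) (Λ : ℝ) :
    IsPreconnected {z : ℂ | z.im ∈ S → Λ < z.re} := by
  refine isPreconnected_of_forall ((Λ + 1 : ℝ) : ℂ) fun z hz => ?_
  have hray : Convex ℝ (Ici z.re ×ℂ {z.im}) :=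
    ((convex_Ici _).linear_preimage reLm).inter ((convex_singleton _).linear_preimage imLm)
  refine ⟨{w | Λ < w.re} ∪ Ici z.re ×ℂ {z.im}, ?_, Or.inl (by simp),
    Or.inr (by simp [mem_reProdIm]), ?_⟩
  · rintro w (hw | ⟨hle, hw⟩)
    · exact fun _ => hw
    · intro hS
      rw [mem_singleton_iff.mp hw] at hS
      exact (hz hS).trans_le hle
  · refine (convex_halfSpace_re_gt Λ).isPreconnected.union ⟨max (Λ + 1) z.re, z.im⟩ ?_ ?_
      hray.isPreconnected
    · exact lt_of_lt_of_le (lt_add_one Λ) (le_max_left _ _)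
    · simp [mem_reProdIm]

section IdentityTheorem

variable {c₀ : ℂ} {d l : ℕ → ℂ} {Λ : ℝ}

lemma differentiableOn_tsum_div_sub {R : Set ℂ} (hR : IsClosed R) (hl : ∀ n, l n ∈ R)
    (hd : Summable (‖d ·‖)) : DifferentiableOn ℂ (fun z => ∑' n, d n / (z - l n)) Rᶜ := by
  intro z hz
  obtain ⟨ε, hε, hball⟩ := Metric.isOpen_iff.mp hR.isOpen_compl z hz
  have hfar : ∀ w ∈ Metric.ball z (ε / 2), ∀ n, ε / 2 ≤ ‖w - l n‖ := by
    intro w hw n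
    have hz_ln : ε ≤ dist (l n) z := not_lt.mp fun h => hball h (hl n)
    rw [← dist_eq_norm]
    linarith [dist_triangle (l n) w z, Metric.mem_ball.mp hw, dist_comm w (l n)]
  have hdiff : DifferentiableOn ℂ (fun z => ∑' n, d n / (z - l n)) (Metric.ball z (ε / 2)) := by
    refine differentiableOn_tsum_of_summable_norm (hd.mul_right (2 / ε)) (fun n w hw => ?_)
      Metric.isOpen_ball fun n w hw => ?_
    · have hne : w - l n ≠ 0 := norm_pos_iff.mp ((half_pos hε).trans_le (hfar w hw n))
      exact DifferentiableAt.differentiableWithinAt (by fun_prop (disch := exact hne))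
    · rw [norm_div, div_eq_mul_inv, ← one_div]
      exact mul_le_mul_of_nonneg_left ((one_div_le_one_div_of_le (half_pos hε)
        (hfar w hw n)).trans_eq (one_div_div ε 2)) (norm_nonneg _)
  exact (hdiff.differentiableAt (Metric.ball_mem_nhds z (half_pos hε))).differentiableWithinAt

lemma expSeriesLaplace_eq_zero_of_im_mem_imp_lt_re (hd : Summable (‖d ·‖))
    (hre : ∀ n, (l n).re ≤ Λ) {S : Set ℝ} (hS : IsClosed S) (himS : ∀ n, (l n).im ∈ S)
    (hzero : ∀ s : ℂ, Λ < s.re → expSeriesLaplace c₀ d l s = 0) {z : ℂ}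
    (hz : z.im ∈ S → Λ < z.re) : expSeriesLaplace c₀ d l z = 0 := by
  set R := im ⁻¹' S ∩ re ⁻¹' Iic Λ
  have hR : IsClosed R := (hS.preimage continuous_im).inter (isClosed_Iic.preimage continuous_re)
  have hV : {z : ℂ | z.im ∈ S → Λ < z.re} = Rᶜ := by
    ext w
    simp [R, imp_iff_not_or]
  have hlR (n : ℕ) : l n ∈ R := ⟨himS n, hre n⟩
  have hanalytic : AnalyticOnNhd ℂ (expSeriesLaplace c₀ d l) Rᶜ := by
    refine DifferentiableOn.analyticOnNhd ?_ hR.isOpen_compl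
    refine DifferentiableOn.add (fun w hw => ?_) (differentiableOn_tsum_div_sub hR hlR hd)
    have hne : w - l 0 ≠ 0 := sub_ne_zero.mpr fun h => hw (h ▸ hlR 0)
    exact DifferentiableAt.differentiableWithinAt
      (by fun_prop (disch := exact pow_ne_zero 2 hne))
  have hhalf : {s : ℂ | Λ < s.re} ∈ 𝓝 ((Λ + 1 : ℝ) : ℂ) :=
    (isOpen_lt continuous_const continuous_re).mem_nhds (by simp)
  refine hanalytic.eqOn_zero_of_preconnected_of_eventuallyEq_zero
    (hV ▸ isPreconnected_setOf_im_mem_imp_lt_re S Λ) (z₀ := ((Λ + 1 : ℝ) : ℂ))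
    (hV ▸ fun _ => by simp) (mem_of_superset hhalf fun s hs => hzero s hs) (hV ▸ hz)

end IdentityTheorem

section Residues

variable {c₀ : ℂ} {d l : ℕ → ℂ} {Λ : ℝ}

lemma eventually_le_abs_add_sub {S : Set ℝ} (hS : S.Finite) (y : ℝ) :
    ∀ᶠ ε in 𝓝[>] (0 : ℝ), ∀ x ∈ S, ε ≤ |y + ε - x| := by
  refine hS.eventually_all.mpr fun x _ => ?_
  rcases le_or_gt x y with hxy | hxy
  · filter_upwards [self_mem_nhdsWithin] with ε (hε : 0 < ε)
    rw [abs_of_nonneg (by linarith)]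
    linarith
  · filter_upwards [Ioo_mem_nhdsGT (half_pos (sub_pos.mpr hxy))] with ε ⟨_, hε⟩
    rw [abs_of_neg (by linarith)]
    linarith

lemma ofReal_mul_I_ne_zero {ε : ℝ} (hε : 0 < ε) : (ε : ℂ) * I ≠ 0 :=
  mul_ne_zero (ofReal_ne_zero.mpr hε.ne') I_ne_zero

lemma tendsto_ofReal_mul_I_nhdsGT_zero :
    Tendsto (fun ε : ℝ => (ε : ℂ) * I) (𝓝[>] 0) (𝓝 0) := by
  simpa using ((continuous_ofReal.tendsto 0).mono_left nhdsWithin_le_nhds).mul_const I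

lemma tendsto_mul_tsum_div_sub (hd : Summable (‖d ·‖)) (hl : Function.Injective l) (m : ℕ)
    (hgap : ∀ᶠ ε : ℝ in 𝓝[>] 0, ∀ n, ε ≤ ‖l m + ε * I - l n‖) :
    Tendsto (fun ε : ℝ => (ε * I) * ∑' n, d n / (l m + ε * I - l n)) (𝓝[>] 0) (𝓝 (d m)) := by
  simp_rw [← tsum_mul_left]
  rw [← tsum_pi_single m (d m)]
  refine tendsto_tsum_of_dominated_convergence hd (fun n => ?_) ?_
  · by_cases hn : n = m
    · subst hn
      rw [Pi.single_eq_same]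
      refine tendsto_const_nhds.congr' ?_
      filter_upwards [self_mem_nhdsWithin] with ε (hε : 0 < ε)
      rw [add_sub_cancel_left, mul_div_cancel₀ _ (ofReal_mul_I_ne_zero hε)]
    · have hne : l m - l n ≠ 0 := sub_ne_zero.mpr fun h => hn (hl h).symm
      simpa [Pi.single_eq_of_ne hn] using tendsto_ofReal_mul_I_nhdsGT_zero.mul
        (tendsto_const_nhds.div
          ((tendsto_const_nhds.add tendsto_ofReal_mul_I_nhdsGT_zero).sub_const (l n))
          (by simpa using hne))
  · filter_upwards [hgap, self_mem_nhdsWithin] with ε hgap (hε : 0 < ε) n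
    rw [norm_mul, norm_div, mul_div_left_comm]
    refine mul_le_of_le_one_right (norm_nonneg _) ((div_le_one (hε.trans_le (hgap n))).mpr ?_)
    simpa [abs_of_pos hε] using hgap n

lemma coeffs_eq_zero_of_expSeriesLaplace_eq_zero (hd : Summable (‖d ·‖))
    (hl : Function.Injective l) {S : Set ℝ} (hS : S.Finite) (himS : ∀ n, (l n).im ∈ S)
    (hzero : ∀ z : ℂ, (z.im ∈ S → Λ < z.re) → expSeriesLaplace c₀ d l z = 0) :
    c₀ = 0 ∧ ∀ n, d n = 0 := by
  have hnear (m : ℕ) : ∀ᶠ ε : ℝ in 𝓝[>] 0,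
      (∀ n, ε ≤ ‖l m + ε * I - l n‖) ∧ expSeriesLaplace c₀ d l (l m + ε * I) = 0 := by
    filter_upwards [eventually_le_abs_add_sub hS (l m).im, self_mem_nhdsWithin]
      with ε hgap (hε : 0 < ε)
    refine ⟨fun n => (hgap _ (himS n)).trans ?_, hzero _ fun hmem => ?_⟩
    · simpa using abs_im_le_norm (l m + ε * I - l n)
    · simpa [hε.not_ge] using hgap _ hmem
  have hres (m : ℕ) := tendsto_mul_tsum_div_sub hd hl m ((hnear m).mono fun _ h => h.1)
  have hc₀ : c₀ = 0 := by
    have hlim := (tendsto_ofReal_mul_I_nhdsGT_zero.mul (hres 0)).neg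
    rw [zero_mul, neg_zero] at hlim
    refine tendsto_nhds_unique (tendsto_const_nhds.congr' ?_) hlim
    filter_upwards [hnear 0, self_mem_nhdsWithin] with ε ⟨_, hL⟩ (hε : 0 < ε)
    rw [expSeriesLaplace, add_sub_cancel_left] at hL
    have hcancel := mul_div_cancel₀ c₀ (pow_ne_zero 2 (ofReal_mul_I_ne_zero hε))
    linear_combination -hcancel + ((ε : ℂ) * I) ^ 2 * hL
  refine ⟨hc₀, fun m => tendsto_nhds_unique (hres m) (tendsto_const_nhds.congr' ?_)⟩
  filter_upwards [hnear m] with ε ⟨_, hL⟩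
  rw [expSeriesLaplace, hc₀, zero_div, zero_add] at hL
  rw [hL, mul_zero]

end Residues

theorem rosier_rouchon_generalization_general
    (c : ℕ → ℂ) (l : ℕ → ℂ)
    (hl_inj : Function.Injective l)
    (hl_real : {n : ℕ | (l n).im ≠ 0}.Finite)
    (hc_summable : Summable fun n => ‖c n‖)
    (hΛ : ∃ Λ : ℝ, ∀ n, (l n).re ≤ Λ)
    (T : ℝ) (hT : 0 < T)
    (hzero : ∀ t : ℝ, t ∈ Set.Ioo 0 T →
      (c 0 * (t : ℂ) + c 1) * Complex.exp (l 0 * (t : ℂ))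
        + ∑' n : ℕ, c (n + 2) * Complex.exp (l (n + 1) * (t : ℂ)) = 0) :
    ∀ n, c n = 0 := by
  obtain ⟨Λ, hre⟩ := hΛ
  have hd : Summable fun n => ‖c (n + 1)‖ := hc_summable.comp_injective (add_left_injective 1)
  have hS : (range fun n => (l n).im).Finite := by
    refine ((hl_real.image fun n => (l n).im).insert 0).subset ?_
    rintro _ ⟨n, rfl⟩
    by_cases h : (l n).im = 0
    exacts [Or.inl h, Or.inr ⟨n, h, rfl⟩]
  obtain ⟨K, hK⟩ := (hS.image abs).bddAbove
  have him (n : ℕ) : |(l n).im| ≤ K := hK ⟨_, mem_range_self n, rfl⟩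
  have hsmall : ∀ t ∈ Ioo 0 T, expSeries (c 0) (fun n => c (n + 1)) l t = 0 := fun t ht => by
    rw [expSeries_eq_add_tsum_succ (summable_mul_cexp_mul hd hre ht.1.le)]
    exact hzero t ht
  have hlaplace (s : ℂ) (hs : Λ < s.re) : expSeriesLaplace (c 0) (fun n => c (n + 1)) l s = 0 :=
    expSeriesLaplace_eq_zero hd hre
      (fun _ ht => expSeries_eq_zero_of_eqOn_Ioo hd hre him hT hsmall ht) hs
  obtain ⟨hc₀, hc⟩ := coeffs_eq_zero_of_expSeriesLaplace_eq_zero hd hl_inj hS mem_range_self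
    fun _ hz => expSeriesLaplace_eq_zero_of_im_mem_imp_lt_re hd hre hS.isClosed mem_range_self
      hlaplace hz
  rintro (_ | n)
  exacts [hc₀, hc n]

theorem rosier_rouchon_generalization
    (c : ℕ → ℂ) (l : ℕ → ℂ)
    (hl_inj : Function.Injective l)
    (hl0_real : (l 0).im = 0)
    (hl_real : {n : ℕ | (l n).im ≠ 0}.Finite)
    (hc_summable : Summable fun n => ‖c n‖)
    (hΛ : ∃ Λ : ℝ, ∀ n, (l n).re ≤ Λ)
    (T : ℝ) (hT : 0 < T)
    (hzero : ∀ t : ℝ, t ∈ Set.Ioo 0 T →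
      (c 0 * (t : ℂ) + c 1) * Complex.exp (l 0 * (t : ℂ))
        + ∑' n : ℕ, c (n + 2) * Complex.exp (l (n + 1) * (t : ℂ)) = 0) :
    ∀ n, c n = 0 :=
  rosier_rouchon_generalization_general c l hl_inj hl_real hc_summable hΛ T hT hzero
end

section
/- Let d ≥ 1 be an integer, let 0 < α_1 < α_2 < ⋯ < α_d < π be real numbers, and let c_1, c_2, …, c_d be real numbers. If c_1 sin(n α_1) + c_2 sin(n α_2) + ⋯ + c_d sin(n α_d) = 0 holds for every n = 1, 2, …, d, then c_1 = c_2 = ⋯ = c_d = 0. -/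
/-!
Writing `sin ((i + 1) θ) = Uᵢ(cos θ) sin θ` with the Chebyshev polynomials `Uᵢ` of the second
kind, the hypothesis says that the vector `(cⱼ sin αⱼ)ⱼ` is annihilated by the matrix
`(Uᵢ(cos αⱼ))ᵢⱼ`. Since `deg Uᵢ = i`, column operations turn this matrix into the Vandermonde
matrix of the values `cos αⱼ`, which are distinct because `cos` is injective on `[0, π]`.
Hence `cⱼ sin αⱼ = 0`, and `sin αⱼ ≠ 0` on `(0, π)`.
-/

open Polynomial

namespace Matrix

variable {R : Type*} [CommRing R] {n : ℕ}

theorem det_eval_matrixOfPolynomials (v : Fin n → R) (p : Fin n → R[X])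
    (h_deg : ∀ i, (p i).natDegree = i) :
    (of fun i j => (p j).eval (v i)).det = (vandermonde v).det * ∏ i, (p i).leadingCoeff := by
  rw [eval_matrixOfPolynomials_eq_vandermonde_mul_matrixOfPolynomials v p (fun i ↦ (h_deg i).le),
    det_mul, det_of_isUpperTriangular (matrixOfPolynomials_blockTriangular p (fun i ↦ (h_deg i).le))]
  simp only [of_apply, leadingCoeff, h_deg]

theorem eq_zero_of_forall_sum_mul_eval_eq_zero [IsDomain R] {f v : Fin n → R} {p : Fin n → R[X]}
    (hf : Function.Injective f) (h_deg : ∀ i, (p i).natDegree = i) (h_ne : ∀ i, p i ≠ 0)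
    (hfv : ∀ i, ∑ j, v j * (p i).eval (f j) = 0) : v = 0 := by
  have h_det : (of fun j i => (p i).eval (f j)).det ≠ 0 := by
    rw [det_eval_matrixOfPolynomials f p h_deg]
    exact mul_ne_zero (det_vandermonde_ne_zero_iff.mpr hf)
      (Finset.prod_ne_zero_iff.mpr fun i _ ↦ leadingCoeff_ne_zero.mpr (h_ne i))
  exact eq_zero_of_vecMul_eq_zero h_det (funext hfv)

end Matrix

open Polynomial.Chebyshev

theorem Polynomial.Chebyshev.U_natCast_ne_zero {R : Type*} [CommRing R] [IsDomain R]
    [NeZero (2 : R)] (n : ℕ) : U R n ≠ 0 := by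
  apply leadingCoeff_ne_zero.mp
  rw [leadingCoeff_U_natCast]
  exact pow_ne_zero n two_ne_zero

theorem Real.sin_natCast_succ_mul (n : ℕ) (θ : ℝ) :
    Real.sin ((n + 1 : ℕ) * θ) = (U ℝ n).eval (Real.cos θ) * Real.sin θ := by
  rw [U_real_cos]
  push_cast
  rfl

theorem sin_vectors_linear_independent_general
    (d : ℕ)
    (α : Fin d → ℝ) (hα_mono : StrictMono α)
    (hα_pos : ∀ i, 0 < α i) (hα_lt : ∀ i, α i < Real.pi)
    (c : Fin d → ℝ)
    (h : ∀ n : ℕ, 1 ≤ n → n ≤ d → ∑ i, c i * Real.sin (n * α i) = 0) :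
    ∀ i, c i = 0 := by
  have hα_mem (i : Fin d) : α i ∈ Set.Icc 0 Real.pi := ⟨(hα_pos i).le, (hα_lt i).le⟩
  have hcos_inj : Function.Injective fun j ↦ Real.cos (α j) := fun a b hab ↦
    hα_mono.injective (Real.injOn_cos (hα_mem a) (hα_mem b) hab)
  have hw : (fun j ↦ c j * Real.sin (α j)) = 0 := by
    refine Matrix.eq_zero_of_forall_sum_mul_eval_eq_zero hcos_inj (p := fun i ↦ U ℝ (i : ℕ))
      (fun i ↦ natDegree_U_natCast ℝ i) (fun i ↦ U_natCast_ne_zero i) fun i ↦ ?_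
    have hi := h (i + 1) (by omega) (by omega)
    simp only [Real.sin_natCast_succ_mul] at hi
    simpa only [mul_assoc, mul_comm, mul_left_comm] using hi
  intro i
  have hsin : Real.sin (α i) ≠ 0 := (Real.sin_pos_of_pos_of_lt_pi (hα_pos i) (hα_lt i)).ne'
  exact (mul_eq_zero.mp (congrFun hw i)).resolve_right hsin

theorem sin_vectors_linear_independent
    (d : ℕ) (hd : 1 ≤ d)
    (α : Fin d → ℝ) (hα_mono : StrictMono α)
    (hα_pos : ∀ i, 0 < α i) (hα_lt : ∀ i, α i < Real.pi)
    (c : Fin d → ℝ)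
    (h : ∀ n : ℕ, 1 ≤ n → n ≤ d → ∑ i, c i * Real.sin (n * α i) = 0) :
    ∀ i, c i = 0 :=
  sin_vectors_linear_independent_general d α hα_mono hα_pos hα_lt c h
end

section
/- Let d ≥ 1 be an integer and let 0 < α_1 < α_2 < ⋯ < α_d < π be real numbers. Then the determinant of the d × d matrix whose (i,j) entry is sin(i·α_j) (rows indexed by i = 1,…,d, columns by j = 1,…,d) equals 2^{d(d-1)} · (∏_{i=1}^{d} sin α_i) · ∏_{1 ≤ i < j ≤ d} sin((α_i - α_j)/2) · sin((α_i + α_j)/2). -/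
open Polynomial Polynomial.Chebyshev in
lemma U_natDegree_le_and_coeff : ∀ n : ℕ,
    (U ℝ (n : ℤ)).natDegree ≤ n ∧ (U ℝ (n : ℤ)).coeff n = 2 ^ n := by
  intro n
  induction n using Nat.strong_induction_on with
  | _ n ih =>
    match n with
    | 0 => simp [U_zero]
    | 1 =>
      constructor
      · calc (U ℝ (1:ℤ)).natDegree = ((2 : ℝ[X]) * X).natDegree := by rw [U_one]
          _ ≤ (2 : ℝ[X]).natDegree + X.natDegree := natDegree_mul_le
          _ ≤ 1 := by simp
      · simp [U_one]
    | (n+2) =>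
      obtain ⟨h1d, h1c⟩ := ih (n+1) (by omega)
      obtain ⟨h0d, h0c⟩ := ih n (by omega)
      have e : ((n+2 : ℕ) : ℤ) = ((n+1 : ℕ) : ℤ) + 1 := by push_cast; ring
      have e1 : ((n+1 : ℕ) : ℤ) - 1 = (n : ℤ) := by push_cast; ring
      rw [e, U_add_one, e1]
      constructor
      · refine (natDegree_sub_le _ _).trans (max_le ?_ (h0d.trans (by omega)))
        calc ((2 : ℝ[X]) * X * U ℝ ((n+1:ℕ):ℤ)).natDegree
            ≤ ((2 : ℝ[X]) * X).natDegree + (U ℝ ((n+1:ℕ):ℤ)).natDegree := natDegree_mul_le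
          _ ≤ ((2 : ℝ[X]).natDegree + X.natDegree) + (n+1) :=
              add_le_add natDegree_mul_le h1d
          _ ≤ n + 2 := by simp <;> omega
      · rw [coeff_sub, mul_assoc, coeff_ofNat_mul,
          show n + 2 = (n + 1) + 1 from rfl, coeff_X_mul, h1c,
          coeff_eq_zero_of_natDegree_lt (by omega : (U ℝ (n:ℤ)).natDegree < n + 1 + 1)]
        ring

open Finset in
/- Determinant identity: `det (sin(i αⱼ))_{i,j=1,…,d}
  = 2^{d(d-1)} ∏ᵢ sin αᵢ ∏_{i<j} sin((αᵢ-αⱼ)/2) sin((αᵢ+αⱼ)/2)`. -/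
theorem det_sin_matrix
    (d : ℕ) (hd : 1 ≤ d)
    (α : Fin d → ℝ) (hα_mono : StrictMono α)
    (hα_pos : ∀ i, 0 < α i) (hα_lt : ∀ i, α i < Real.pi) :
    Matrix.det (Matrix.of fun i j : Fin d => Real.sin ((i.1 + 1 : ℕ) * α j))
      = 2 ^ (d * (d - 1)) * (∏ i, Real.sin (α i)) *
        ∏ i, ∏ j ∈ Ioi i,
          Real.sin ((α i - α j) / 2) * Real.sin ((α i + α j) / 2) := by
  classical
  set x : Fin d → ℝ := fun j => Real.cos (α j) with hx
  set p : Fin d → Polynomial ℝ := fun j => Polynomial.Chebyshev.U ℝ (j.1 : ℤ) with hp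
  have hdeg : ∀ j : Fin d, (p j).natDegree ≤ j.1 := fun j => (U_natDegree_le_and_coeff j.1).1
  -- Step 1: factor out the sines
  have hM : (Matrix.of fun i j : Fin d => Real.sin ((i.1 + 1 : ℕ) * α j))
      = (Matrix.of fun i j : Fin d => (p i).eval (x j)) *
        Matrix.diagonal (fun j => Real.sin (α j)) := by
    ext i j
    rw [Matrix.mul_diagonal]
    simp only [Matrix.of_apply, hp, hx]
    rw [Polynomial.Chebyshev.U_real_cos (α j) (i.1 : ℤ)]
    congr 1
    push_cast
    ring
  -- Step 2: transpose and decompose as Vandermonde times coefficient matrix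
  have hT : (Matrix.of fun i j : Fin d => (p i).eval (x j)).det
      = (Matrix.of fun i j : Fin d => (p j).eval (x i)).det := by
    rw [← Matrix.det_transpose (Matrix.of fun i j : Fin d => (p j).eval (x i))]
    congr 1
  have hV := Matrix.eval_matrixOfPolynomials_eq_vandermonde_mul_matrixOfPolynomials x p hdeg
  -- Step 3: determinant of the coefficient matrix
  have hC : (Matrix.of fun i j : Fin d => (p j).coeff i.1).det = ∏ i : Fin d, (2:ℝ) ^ i.1 := by
    rw [Matrix.det_of_upperTriangular (Matrix.matrixOfPolynomials_blockTriangular p hdeg)]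
    exact Finset.prod_congr rfl fun i _ => (U_natDegree_le_and_coeff i.1).2
  rw [hM, Matrix.det_mul, Matrix.det_diagonal, hT, hV, Matrix.det_mul,
    hC, Matrix.det_vandermonde]
  -- Step 4: rewrite each Vandermonde factor
  have key : ∀ i : Fin d, ∀ j ∈ Ioi i, x j - x i
      = 2 * (Real.sin ((α i - α j) / 2) * Real.sin ((α i + α j) / 2)) := by
    intro i j _
    simp only [hx]
    rw [Real.cos_sub_cos, show (α j + α i) / 2 = (α i + α j) / 2 by ring,
      show (α j - α i) / 2 = -((α i - α j) / 2) by ring, Real.sin_neg]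
    ring
  rw [Finset.prod_congr rfl fun i _ => Finset.prod_congr rfl (key i)]
  simp only [Finset.prod_mul_distrib, Finset.prod_const]
  have h2 : (∏ i : Fin d, (2:ℝ) ^ (Ioi i).card) * ∏ i : Fin d, (2:ℝ) ^ i.1
      = 2 ^ (d * (d - 1)) := by
    rw [← Finset.prod_mul_distrib]
    have h3 : ∀ i : Fin d, (2:ℝ) ^ (Ioi i).card * 2 ^ i.1 = 2 ^ (d - 1) := by
      intro i; rw [Fin.card_Ioi, ← pow_add]; congr 1; omega
    rw [Finset.prod_congr rfl fun i _ => h3 i, Finset.prod_const, Finset.card_univ,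
      Fintype.card_fin, ← pow_mul, Nat.mul_comm]
  linear_combination ((∏ i : Fin d, Real.sin (α i)) *
    (∏ i : Fin d, ∏ j ∈ Ioi i, Real.sin ((α i - α j) / 2)) *
    (∏ i : Fin d, ∏ j ∈ Ioi i, Real.sin ((α i + α j) / 2))) * h2
end

section
/- Let c > 0 be real with 2c not an integer, let T > 0, and let α ∈ (0,π). For each integer n ≥ 1 let λ_n and μ_n be the two distinct complex roots of z² + n²z + c²n² = 0, with μ_n = -n²/2 + (n²/2)√(1 - 4c²/n²) (principal complex square root) and λ_n the other root. Then for every (t,x) ∈ (0,T) × (0,π) the series ∑_{n≥1} (sin(nα)/(μ_n - λ_n)) · (e^{μ_n(T-t)} - e^{λ_n(T-t)}) · sin(nx) converges absolutely, and the function ξ(t,x) = (2/π) ∑_{n≥1} (sin(nα)/(μ_n - λ_n)) · (e^{μ_n(T-t)} - e^{λ_n(T-t)}) · sin(nx) is bounded on (0,T) × (0,π). -/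
/-!
Put `d_n = μ_n - λ_n`. Since `(1 - 4c²/n²) ^ (1/2)` squares back to `1 - 4c²/n²`, we get
`d_n² = n⁴ - 4c²n²`, and `μ_n, λ_n` are the two roots of `z² + n²z + c²n²`. A root of a quadratic
with nonnegative real coefficients has nonpositive real part, so for `t < T` both exponentials
have modulus at most `1` and the `n`-th term is at most `2 / |d_n|`, uniformly in `(t, x)`.
Finally `|d_n|² = |n⁴ - 4c²n²| ≥ n⁴ / 4` for large `n`, so `∑ 2 / |d_n|` converges.
-/

open Filter

lemma re_nonpos_of_sq_add_mul_add_eq_zero {b k : ℝ} (hb : 0 ≤ b) (hk : 0 ≤ k) {z : ℂ}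
    (hz : z ^ 2 + b * z + k = 0) : z.re ≤ 0 := by
  have hre : z.re * z.re - z.im * z.im + b * z.re + k = 0 := by
    simpa [sq] using congrArg Complex.re hz
  have him : z.re * z.im + z.im * z.re + b * z.im = 0 := by
    simpa [sq] using congrArg Complex.im hz
  replace him : z.im * (2 * z.re + b) = 0 := by linear_combination him
  rcases mul_eq_zero.1 him with h | h
  · rw [h] at hre
    nlinarith
  · linarith

lemma re_nonpos_of_add_eq_of_sub_sq_eq {b k : ℝ} (hb : 0 ≤ b) (hk : 0 ≤ k) {z w : ℂ}
    (hadd : z + w = -b) (hsub : (z - w) ^ 2 = b ^ 2 - 4 * k) : z.re ≤ 0 ∧ w.re ≤ 0 :=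
  ⟨re_nonpos_of_sq_add_mul_add_eq_zero hb hk <| by
    linear_combination (1 / 4 : ℂ) * hsub + (3 * z - w + b) / 4 * hadd,
  re_nonpos_of_sq_add_mul_add_eq_zero hb hk <| by
    linear_combination (1 / 4 : ℂ) * hsub + (3 * w - z + b) / 4 * hadd⟩

lemma norm_exp_mul_ofReal_le_one {z : ℂ} (hz : z.re ≤ 0) {s : ℝ} (hs : 0 ≤ s) :
    ‖Complex.exp (z * s)‖ ≤ 1 := by
  rw [Complex.norm_exp, Complex.re_mul_ofReal, Real.exp_le_one_iff]
  exact mul_nonpos_of_nonpos_of_nonneg hz hs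

lemma norm_exp_mul_ofReal_sub_le_two {z w : ℂ} (hz : z.re ≤ 0) (hw : w.re ≤ 0) {s : ℝ}
    (hs : 0 ≤ s) : ‖Complex.exp (z * s) - Complex.exp (w * s)‖ ≤ 2 :=
  calc ‖Complex.exp (z * s) - Complex.exp (w * s)‖
      ≤ ‖Complex.exp (z * s)‖ + ‖Complex.exp (w * s)‖ := norm_sub_le _ _
    _ ≤ 1 + 1 := add_le_add (norm_exp_mul_ofReal_le_one hz hs) (norm_exp_mul_ofReal_le_one hw hs)
    _ = 2 := one_add_one_eq_two

lemma norm_sin_div_mul_mul_sin_le (a b : ℝ) (d : ℂ) {e : ℂ} (he : ‖e‖ ≤ 2) :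
    ‖(Real.sin a : ℂ) / d * e * (Real.sin b : ℂ)‖ ≤ 2 / ‖d‖ := by
  have hsin : ∀ θ : ℝ, ‖(Real.sin θ : ℂ)‖ ≤ 1 := fun θ => by
    rw [Complex.norm_real, Real.norm_eq_abs]
    exact Real.abs_sin_le_one θ
  rw [norm_mul, norm_mul, norm_div]
  calc ‖(Real.sin a : ℂ)‖ / ‖d‖ * ‖e‖ * ‖(Real.sin b : ℂ)‖ ≤ 1 / ‖d‖ * 2 * 1 := by
        gcongr
        exacts [hsin a, hsin b]
    _ = 2 / ‖d‖ := by ring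

lemma summable_inv_norm_of_sq_eq {d : ℕ → ℂ} {C : ℝ}
    (hd : ∀ᶠ n in atTop, d n ^ 2 = (n : ℂ) ^ 4 - C * (n : ℂ) ^ 2) :
    Summable fun n => ‖d n‖⁻¹ := by
  have hg : Summable fun n : ℕ => 2 * (1 / (n : ℝ) ^ 2) :=
    (Real.summable_one_div_nat_pow.2 one_lt_two).mul_left 2
  refine Summable.of_norm_bounded_eventually_nat hg ?_
  filter_upwards [hd, eventually_ge_atTop (⌈2 * C⌉₊ + 1)] with n hdn hn
  have hn1 : (1 : ℝ) ≤ n := by exact_mod_cast (Nat.le_add_left 1 _).trans hn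
  have hCn : 2 * C ≤ n := (Nat.le_ceil _).trans (by exact_mod_cast (Nat.le_succ _).trans hn)
  have hnorm_sq : ‖d n‖ ^ 2 = |(n : ℝ) ^ 4 - C * (n : ℝ) ^ 2| := by
    rw [← norm_pow, hdn]
    exact_mod_cast Complex.norm_real _
  have hlower : (n : ℝ) ^ 2 / 2 ≤ ‖d n‖ := by
    have : (n : ℝ) ^ 4 / 4 ≤ ‖d n‖ ^ 2 := by
      rw [hnorm_sq]
      refine le_trans ?_ (le_abs_self _)
      nlinarith [mul_le_mul_of_nonneg_left hCn (sq_nonneg (n : ℝ)),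
        mul_nonneg (pow_nonneg (by positivity : (0 : ℝ) ≤ n) 3) (sub_nonneg.2 hn1)]
    nlinarith [norm_nonneg (d n)]
  rw [norm_inv, norm_norm]
  calc ‖d n‖⁻¹ ≤ ((n : ℝ) ^ 2 / 2)⁻¹ := inv_anti₀ (by positivity) hlower
    _ = 2 * (1 / (n : ℝ) ^ 2) := by ring

lemma sub_sq_eq_of_eq_cpow_half (c : ℝ) {n : ℕ} (hn : n ≠ 0) {μ ν : ℂ}
    (hμ : μ = -(n : ℂ) ^ 2 / 2 +
      (n : ℂ) ^ 2 / 2 * ((1 - 4 * (c : ℂ) ^ 2 / (n : ℂ) ^ 2) ^ ((1 : ℂ) / 2)))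
    (hν : ν = -(n : ℂ) ^ 2 - μ) :
    (μ - ν) ^ 2 = (n : ℂ) ^ 4 - 4 * c ^ 2 * (n : ℂ) ^ 2 := by
  have hroot : ((1 - 4 * (c : ℂ) ^ 2 / (n : ℂ) ^ 2) ^ ((1 : ℂ) / 2)) ^ 2
      = 1 - 4 * (c : ℂ) ^ 2 / (n : ℂ) ^ 2 := by
    rw [one_div]
    exact_mod_cast Complex.cpow_nat_inv_pow _ two_ne_zero
  have hsub : μ - ν = (n : ℂ) ^ 2 * (1 - 4 * (c : ℂ) ^ 2 / (n : ℂ) ^ 2) ^ ((1 : ℂ) / 2) := by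
    rw [hν, hμ]
    ring
  have hn' : (n : ℂ) ≠ 0 := Nat.cast_ne_zero.2 hn
  rw [hsub, mul_pow, hroot]
  field_simp

open Real in
theorem xi_series_bounded_general
    (c : ℝ)
    (T : ℝ)
    (α : ℝ)
    (lam mu : ℕ → ℂ)
    (hmu : ∀ n : ℕ, 1 ≤ n →
      mu n = -(n : ℂ) ^ 2 / 2 +
        (n : ℂ) ^ 2 / 2 * ((1 - 4 * (c : ℂ) ^ 2 / (n : ℂ) ^ 2) ^ ((1 : ℂ) / 2)))
    (hlam : ∀ n : ℕ, 1 ≤ n → lam n = -(n : ℂ) ^ 2 - mu n) :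
    (∀ t x : ℝ, t ∈ Set.Ioo 0 T → x ∈ Set.Ioo 0 π →
      Summable fun n : ℕ =>
        ‖((Real.sin ((n + 1 : ℕ) * α) : ℂ) / (mu (n + 1) - lam (n + 1))) *
            (Complex.exp (mu (n + 1) * (T - t)) - Complex.exp (lam (n + 1) * (T - t))) *
            (Real.sin ((n + 1 : ℕ) * x) : ℂ)‖) ∧
    ∃ M : ℝ, ∀ t x : ℝ, t ∈ Set.Ioo 0 T → x ∈ Set.Ioo 0 π →
      ‖(2 / π : ℂ) * ∑' n : ℕ,
          ((Real.sin ((n + 1 : ℕ) * α) : ℂ) / (mu (n + 1) - lam (n + 1))) *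
            (Complex.exp (mu (n + 1) * (T - t)) - Complex.exp (lam (n + 1) * (T - t))) *
            (Real.sin ((n + 1 : ℕ) * x) : ℂ)‖ ≤ M := by
  have hdisc : ∀ n, 1 ≤ n → (mu n - lam n) ^ 2 = (n : ℂ) ^ 4 - 4 * c ^ 2 * (n : ℂ) ^ 2 :=
    fun n hn => sub_sq_eq_of_eq_cpow_half c (by omega) (hmu n hn) (hlam n hn)
  have hre : ∀ n, 1 ≤ n → (mu n).re ≤ 0 ∧ (lam n).re ≤ 0 := fun n hn =>
    re_nonpos_of_add_eq_of_sub_sq_eq (b := (n : ℝ) ^ 2) (k := c ^ 2 * (n : ℝ) ^ 2)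
      (by positivity) (by positivity)
      (by rw [hlam n hn]; push_cast; ring) (by push_cast; linear_combination hdisc n hn)
  have ha : Summable fun n => 2 / ‖mu (n + 1) - lam (n + 1)‖ := by
    have := summable_inv_norm_of_sq_eq (d := fun n => mu n - lam n) (C := 4 * c ^ 2)
      (eventually_ge_atTop 1 |>.mono fun n hn => by push_cast; exact hdisc n hn)
    simpa [div_eq_mul_inv] using ((summable_nat_add_iff 1).2 this).mul_left 2
  have hterm : ∀ t x : ℝ, t ∈ Set.Ioo 0 T → ∀ n : ℕ,
      ‖((Real.sin ((n + 1 : ℕ) * α) : ℂ) / (mu (n + 1) - lam (n + 1))) *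
          (Complex.exp (mu (n + 1) * (T - t)) - Complex.exp (lam (n + 1) * (T - t))) *
          (Real.sin ((n + 1 : ℕ) * x) : ℂ)‖ ≤ 2 / ‖mu (n + 1) - lam (n + 1)‖ := by
    intro t x ht n
    obtain ⟨hmu_re, hlam_re⟩ := hre (n + 1) (Nat.le_add_left 1 n)
    refine norm_sin_div_mul_mul_sin_le _ _ _ ?_
    exact_mod_cast norm_exp_mul_ofReal_sub_le_two hmu_re hlam_re (sub_nonneg.2 ht.2.le)
  refine ⟨fun t x ht _ => ha.of_nonneg_of_le (fun _ => norm_nonneg _) (hterm t x ht),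
    ‖(2 / π : ℂ)‖ * ∑' n, 2 / ‖mu (n + 1) - lam (n + 1)‖, fun t x ht _ => ?_⟩
  rw [norm_mul]
  gcongr
  exact tsum_of_norm_bounded ha.hasSum (hterm t x ht)

open Real in
theorem xi_series_bounded
    (c : ℝ) (hc : 0 < c) (hc2 : ∀ m : ℤ, (m : ℝ) ≠ 2 * c)
    (T : ℝ) (hT : 0 < T)
    (α : ℝ) (hα : α ∈ Set.Ioo 0 π)
    (lam mu : ℕ → ℂ)
    (hmu : ∀ n : ℕ, 1 ≤ n →
      mu n = -(n : ℂ) ^ 2 / 2 +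
        (n : ℂ) ^ 2 / 2 * ((1 - 4 * (c : ℂ) ^ 2 / (n : ℂ) ^ 2) ^ ((1 : ℂ) / 2)))
    (hlam : ∀ n : ℕ, 1 ≤ n → lam n = -(n : ℂ) ^ 2 - mu n) :
    (∀ t x : ℝ, t ∈ Set.Ioo 0 T → x ∈ Set.Ioo 0 π →
      Summable fun n : ℕ =>
        ‖((Real.sin ((n + 1 : ℕ) * α) : ℂ) / (mu (n + 1) - lam (n + 1))) *
            (Complex.exp (mu (n + 1) * (T - t)) - Complex.exp (lam (n + 1) * (T - t))) *
            (Real.sin ((n + 1 : ℕ) * x) : ℂ)‖) ∧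
    ∃ M : ℝ, ∀ t x : ℝ, t ∈ Set.Ioo 0 T → x ∈ Set.Ioo 0 π →
      ‖(2 / π : ℂ) * ∑' n : ℕ,
          ((Real.sin ((n + 1 : ℕ) * α) : ℂ) / (mu (n + 1) - lam (n + 1))) *
            (Complex.exp (mu (n + 1) * (T - t)) - Complex.exp (lam (n + 1) * (T - t))) *
            (Real.sin ((n + 1 : ℕ) * x) : ℂ)‖ ≤ M :=
  xi_series_bounded_general c T α lam mu hmu hlam
end
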